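/- arXiv:2604.05664 — 2 statements merged into one kernel-verified Lean document; each statement's English description precedes it below -/
import Mathlib

section
/- Let V be a ℚ-vector space, d ≥ 1, and for each pair (a, b) ∈ {1,…,d}^2 let P_{a,b} ∈ V[x, y] be a polynomial. Define F : ℤ^2 → V by F(m, n) = P_{a,b}(m, n) when (m, n) ≡ (a, b) mod d, and suppose F(m, n) = 0 unless m ≥ 0 and n ≥ 0. Then the function H : ℤ → V given by H(n) = ∑_{m_1 + m_2 = n} F(m_1, m_2) is a quasi-polynomial in n for n ≥ 0 (that is, there exist d' ≥ 1 and polynomials Q_1, …, Q_{d'} ∈ V[x] with H(n) = Q_j(n) whenever n ≥ 0 and n ≡ j mod d'). -/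
open Finset Polynomial



lemma nonneg_aux {d u x : ℤ} (hd : 0 < d) (hx : -d < x) (h : x = d * u) : 0 ≤ u := by
  by_contra h'
  push_neg at h'
  have h1 : u ≤ -1 := by omega
  have h2 : d * u ≤ d * (-1) := mul_le_mul_of_nonneg_left h1 (le_of_lt hd)
  omega

lemma reindex {d : ℕ} [NeZero d] (b : ZMod d) (n : ℤ) (hn : 0 ≤ n) (f : ℤ → ℚ) :
    ∑ m ∈ (Finset.Icc (0:ℤ) n).filter (fun m : ℤ => (m : ZMod d) = b), f m
      = ∑ t ∈ Finset.range ((n - b.val) / d + 1).toNat, f ((b.val : ℤ) + (t : ℤ) * d) := by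
  have hd : 0 < (d:ℤ) := by exact_mod_cast Nat.pos_of_ne_zero (NeZero.ne d)
  have hbv : (b.val : ℤ) < d := by exact_mod_cast ZMod.val_lt b
  have hdvd : ∀ m : ℤ, (m : ZMod d) = b → (d:ℤ) ∣ m - b.val := by
    intro m hm
    have : ((m - (b.val:ℤ) : ℤ) : ZMod d) = 0 := by
      push_cast
      rw [hm, ZMod.natCast_rightInverse b]
      ring
    exact (ZMod.intCast_zmod_eq_zero_iff_dvd _ _).mp this
  refine Finset.sum_nbij' (i := fun m => ((m - b.val) / d).toNat)
    (j := fun t => (b.val : ℤ) + (t : ℤ) * d) ?_ ?_ ?_ ?_ ?_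
  · intro m hm
    simp only [Finset.mem_filter, Finset.mem_Icc] at hm
    obtain ⟨⟨hm0, hmn⟩, hmb⟩ := hm
    obtain ⟨k, hk⟩ := hdvd m hmb
    have hk0 : 0 ≤ k := nonneg_aux hd (by omega) hk
    have hkd : (m - b.val) / d = k := by rw [hk]; exact Int.mul_ediv_cancel_left _ (by omega)
    have hle : (m - b.val) / d ≤ (n - b.val) / d :=
      Int.ediv_le_ediv hd (by omega)
    simp only [Finset.mem_range]
    omega
  · intro t ht
    simp only [Finset.mem_range] at ht
    have h1 : (t:ℤ) ≤ (n - b.val) / d := by omega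
    have h2 : (t:ℤ) * d ≤ n - b.val := (Int.le_ediv_iff_mul_le hd).mp h1
    simp only [Finset.mem_filter, Finset.mem_Icc]
    refine ⟨⟨by positivity, by omega⟩, ?_⟩
    push_cast
    rw [ZMod.natCast_rightInverse b, ZMod.natCast_self]
    ring
  · intro m hm
    simp only [Finset.mem_filter, Finset.mem_Icc] at hm
    obtain ⟨⟨hm0, hmn⟩, hmb⟩ := hm
    obtain ⟨k, hk⟩ := hdvd m hmb
    have hk0 : 0 ≤ k := nonneg_aux hd (by omega) hk
    have hkd : (m - b.val) / d = k := by rw [hk]; exact Int.mul_ediv_cancel_left _ (by omega)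
    rw [hkd, Int.toNat_of_nonneg hk0, mul_comm]
    omega
  · intro t ht
    have : ((b.val:ℤ) + t * d - b.val) / d = t := by
      rw [add_sub_cancel_left]
      exact Int.mul_ediv_cancel _ (by omega)
    rw [this]
    omega
  · intro m hm
    simp only [Finset.mem_filter, Finset.mem_Icc] at hm
    obtain ⟨⟨hm0, hmn⟩, hmb⟩ := hm
    obtain ⟨k, hk⟩ := hdvd m hmb
    have hk0 : 0 ≤ k := nonneg_aux hd (by omega) hk
    have hkd : (m - b.val) / d = k := by rw [hk]; exact Int.mul_ediv_cancel_left _ (by omega)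
    congr 1
    rw [hkd, Int.toNat_of_nonneg hk0, mul_comm]
    omega

lemma Ncast {d : ℕ} [NeZero d] (b r : ZMod d) (n : ℤ) (hn : 0 ≤ n) (hr : (n : ZMod d) = r) :
    ((((n - (b.val:ℤ)) / d + 1).toNat : ℚ))
      = ((n:ℚ) - r.val) / d + (if b.val ≤ r.val then 1 else 0) := by
  have hd : 0 < (d:ℤ) := by exact_mod_cast Nat.pos_of_ne_zero (NeZero.ne d)
  have hbv : (b.val : ℤ) < d := by exact_mod_cast ZMod.val_lt b
  have hrv : (r.val : ℤ) < d := by exact_mod_cast ZMod.val_lt r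
  have hdvd : (d:ℤ) ∣ n - r.val := by
    have : ((n - (r.val:ℤ) : ℤ) : ZMod d) = 0 := by
      push_cast
      rw [hr, ZMod.natCast_rightInverse r]
      ring
    exact (ZMod.intCast_zmod_eq_zero_iff_dvd _ _).mp this
  obtain ⟨u, hu⟩ := hdvd
  have hu0 : 0 ≤ u := nonneg_aux hd (by omega) hu
  have huq : ((u:ℚ)) = ((n:ℚ) - r.val) / d := by
    have : ((n:ℚ) - r.val) = d * u := by exact_mod_cast hu
    rw [this, mul_div_cancel_left₀]
    exact Nat.cast_ne_zero.mpr (NeZero.ne d)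
  -- compute the ediv
  have key : (n - (b.val:ℤ)) / d = if b.val ≤ r.val then u else u - 1 := by
    have hsplit : n - (b.val:ℤ) = ((r.val:ℤ) - b.val) + u * d := by linarith [hu]
    rw [hsplit, Int.add_mul_ediv_right _ _ (by omega : (d:ℤ) ≠ 0)]
    split_ifs with h
    · have hh : (b.val:ℤ) ≤ r.val := by exact_mod_cast h
      have h0 : ((r.val:ℤ) - b.val) / d = 0 := Int.ediv_eq_zero_of_lt (by omega) (by omega)
      omega
    · push_neg at h
      have hlt : (r.val:ℤ) - b.val < 0 := by
        have : (r.val:ℤ) < b.val := by exact_mod_cast h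
        omega
      have h1 : (((r.val:ℤ) - b.val) + 1 * d) / d = ((r.val:ℤ) - b.val) / d + 1 :=
        Int.add_mul_ediv_right _ _ (by omega : (d:ℤ) ≠ 0)
      have h2 : (((r.val:ℤ) - b.val) + 1 * d) / d = 0 :=
        Int.ediv_eq_zero_of_lt (by omega) (by omega)
      omega
  rw [key]
  split_ifs with h
  · have : (((u + 1).toNat : ℚ)) = (u:ℚ) + 1 := by
      have := Int.toNat_of_nonneg (by omega : (0:ℤ) ≤ u + 1)
      exact_mod_cast congrArg (Int.cast : ℤ → ℚ) this
    rw [this, huq]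
  · have : (((u - 1 + 1).toNat : ℚ)) = (u:ℚ) := by
      have h3 : u - 1 + 1 = u := by ring
      rw [h3]
      exact_mod_cast congrArg (Int.cast : ℤ → ℚ) (Int.toNat_of_nonneg hu0)
    rw [this, huq]
    ring

lemma key {d : ℕ} [NeZero d] (b r : ZMod d) (i j : ℕ) :
    ∃ p : Polynomial ℚ, ∀ n : ℤ, 0 ≤ n → (n : ZMod d) = r →
      (∑ m ∈ (Finset.Icc (0:ℤ) n).filter (fun m : ℤ => (m : ZMod d) = b),
        (m:ℚ)^i * (((n - m : ℤ)):ℚ)^j) = p.eval (n:ℚ) := by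
  classical
  set ε : ℚ := if b.val ≤ r.val then 1 else 0 with hε
  set P2 : Polynomial (Polynomial ℚ) :=
    (C (C ((b.val:ℚ))) + C (C ((d:ℚ))) * X)^i *
      (C (X - C ((b.val:ℚ))) - C (C ((d:ℚ))) * X)^j with hP2
  have hdeg2 : P2.natDegree ≤ i + j := by
    have h1 : (C (C ((b.val:ℚ))) + C (C ((d:ℚ))) * X :
        Polynomial (Polynomial ℚ)).natDegree ≤ 1 :=
      le_trans (natDegree_add_le _ _)
        (max_le (by simp) (le_trans (natDegree_C_mul_le _ _) natDegree_X_le))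
    have h2 : (C (X - C ((b.val:ℚ))) - C (C ((d:ℚ))) * X :
        Polynomial (Polynomial ℚ)).natDegree ≤ 1 :=
      le_trans (natDegree_sub_le _ _)
        (max_le (by simp) (le_trans (natDegree_C_mul_le _ _) natDegree_X_le))
    refine le_trans (natDegree_mul_le) (add_le_add ?_ ?_)
    · exact le_trans (natDegree_pow_le) (by simpa using Nat.mul_le_mul_left i h1)
    · exact le_trans (natDegree_pow_le) (by simpa using Nat.mul_le_mul_left j h2)
  refine ⟨∑ k ∈ Finset.range (i+j+1), P2.coeff k *
      ∑ l ∈ Finset.range (k+1), C (_root_.bernoulli l * ((k+1).choose l) / (k+1)) *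
        ((X - C ((r.val:ℚ))) * C (1/(d:ℚ)) + C ε)^(k+1-l), ?_⟩
  intro n hn hr
  set N : ℕ := ((n - (b.val:ℤ)) / d + 1).toNat with hNdef
  set Pn : Polynomial ℚ := P2.map (Polynomial.evalRingHom ((n:ℚ))) with hPndef
  have hdegn : Pn.natDegree < i + j + 1 :=
    lt_of_le_of_lt (le_trans Polynomial.natDegree_map_le hdeg2) (by omega)
  have hPneval : ∀ t : ℕ, Pn.eval ((t:ℚ))
      = ((b.val:ℚ) + d * t)^i * (((n:ℚ) - b.val) - d * t)^j := by
    intro t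
    simp [hPndef, hP2, Polynomial.map_mul, Polynomial.map_pow, Polynomial.map_add,
      Polynomial.map_sub, Polynomial.map_C, Polynomial.map_X]
  have hNq : ((N:ℚ)) = ((n:ℚ) - r.val) / d + ε := Ncast b r n hn hr
  calc (∑ m ∈ (Finset.Icc (0:ℤ) n).filter (fun m : ℤ => (m : ZMod d) = b),
        (m:ℚ)^i * (((n - m : ℤ)):ℚ)^j)
      = ∑ t ∈ Finset.range N,
          (((b.val : ℤ) + (t:ℤ) * d : ℤ):ℚ)^i * (((n - ((b.val:ℤ) + (t:ℤ) * d) : ℤ)):ℚ)^j := by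
        exact reindex b n hn _
    _ = ∑ t ∈ Finset.range N, Pn.eval ((t:ℚ)) := by
        refine Finset.sum_congr rfl (fun t _ => ?_)
        rw [hPneval t]
        push_cast
        ring
    _ = ∑ t ∈ Finset.range N, ∑ k ∈ Finset.range (i+j+1), Pn.coeff k * ((t:ℚ))^k := by
        exact Finset.sum_congr rfl (fun t _ => Polynomial.eval_eq_sum_range' hdegn _)
    _ = ∑ k ∈ Finset.range (i+j+1), Pn.coeff k * ∑ t ∈ Finset.range N, ((t:ℚ))^k := by
        rw [Finset.sum_comm]
        exact Finset.sum_congr rfl (fun k _ => (Finset.mul_sum _ _ _).symm)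
    _ = ∑ k ∈ Finset.range (i+j+1), (P2.coeff k).eval ((n:ℚ)) *
          ∑ l ∈ Finset.range (k+1),
            _root_.bernoulli l * ((k+1).choose l) * ((N:ℚ))^(k+1-l) / (k+1) := by
        refine Finset.sum_congr rfl (fun k _ => ?_)
        rw [hPndef, Polynomial.coeff_map, sum_range_pow]
        rfl
    _ = _ := by
        simp only [eval_finset_sum, eval_mul, eval_pow, eval_add, eval_sub, eval_C, eval_X]
        refine Finset.sum_congr rfl (fun k _ => ?_)
        congr 1
        refine Finset.sum_congr rfl (fun l _ => ?_)
        rw [hNq]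
        have hb : ((n:ℚ) - r.val) * (1/(d:ℚ)) + ε = ((n:ℚ) - r.val)/d + ε := by ring
        rw [hb]
        ring

lemma sum_swap4 {α : Type*} {V : Type*} [AddCommMonoid V] (s : Finset α)
    (t₁ t₂ t₃ : Finset ℕ) (f : α → ℕ → ℕ → ℕ → V) :
    ∑ b ∈ s, ∑ i ∈ t₁, ∑ j ∈ t₂, ∑ k ∈ t₃, f b i j k
      = ∑ k ∈ t₃, ∑ b ∈ s, ∑ i ∈ t₁, ∑ j ∈ t₂, f b i j k :=
  calc ∑ b ∈ s, ∑ i ∈ t₁, ∑ j ∈ t₂, ∑ k ∈ t₃, f b i j k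
      = ∑ b ∈ s, ∑ i ∈ t₁, ∑ k ∈ t₃, ∑ j ∈ t₂, f b i j k :=
        Finset.sum_congr rfl fun b _ => Finset.sum_congr rfl fun i _ => Finset.sum_comm
    _ = ∑ b ∈ s, ∑ k ∈ t₃, ∑ i ∈ t₁, ∑ j ∈ t₂, f b i j k :=
        Finset.sum_congr rfl fun b _ => Finset.sum_comm
    _ = _ := Finset.sum_comm


/-- Let `F : ℤ² → V` be given on the nonnegative quadrant by polynomials
`P_{a,b} ∈ V[x,y]` depending only on the residues `(a,b)` of `(m,n)` mod `d` (encoded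
by coefficients `c : ZMod d → ZMod d → ℕ → ℕ → V` of degree at most `e`), and vanish
off the nonnegative quadrant. Then `H(n) = ∑_{m₁+m₂=n} F(m₁,m₂)` is a quasi-polynomial
in `n` for `n ≥ 0`: there exist `d' ≥ 1` and polynomials `Q_j ∈ V[x]` (one for each
residue class mod `d'`) with `H(n) = Q_j(n)` whenever `n ≥ 0` and `n ≡ j mod d'`. -/
theorem stmt_7 {V : Type*} [AddCommGroup V] [Module ℚ V]
    (d : ℕ) (hd : 1 ≤ d) (e : ℕ) (c : ZMod d → ZMod d → ℕ → ℕ → V)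
    (F : ℤ → ℤ → V)
    (hF1 : ∀ m n : ℤ, 0 ≤ m → 0 ≤ n →
      F m n = ∑ i ∈ Finset.range (e + 1), ∑ j ∈ Finset.range (e + 1),
        (((m : ℚ)) ^ i * ((n : ℚ)) ^ j) • c (m : ZMod d) (n : ZMod d) i j)
    (hF0 : ∀ m n : ℤ, ¬(0 ≤ m ∧ 0 ≤ n) → F m n = 0) :
    ∃ d' : ℕ, 1 ≤ d' ∧ ∃ (e' : ℕ) (q : ZMod d' → ℕ → V),
      ∀ n : ℤ, 0 ≤ n →
        (∑ m ∈ Finset.Icc (0 : ℤ) n, F m (n - m))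
          = ∑ i ∈ Finset.range (e' + 1), ((n : ℚ)) ^ i • q (n : ZMod d') i := by
  haveI : NeZero d := ⟨by omega⟩
  classical
  choose P hP using fun (b r : ZMod d) (i j : ℕ) => key b r i j
  refine ⟨d, hd, ?_⟩
  set e' : ℕ := Finset.sup Finset.univ (fun b : ZMod d => Finset.sup Finset.univ
    (fun r : ZMod d => Finset.sup (Finset.range (e+1)) (fun i => Finset.sup
      (Finset.range (e+1)) (fun j => (P b r i j).natDegree)))) with he'
  have hdeg : ∀ b r : ZMod d, ∀ i ∈ Finset.range (e+1), ∀ j ∈ Finset.range (e+1),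
      (P b r i j).natDegree < e' + 1 := by
    intro b r i hi j hj
    have h1 : (P b r i j).natDegree ≤ e' := by
      rw [he']
      refine le_trans (Finset.le_sup (f := fun j => (P b r i j).natDegree) hj) ?_
      refine le_trans (Finset.le_sup (f := fun i => Finset.sup (Finset.range (e+1))
        (fun j => (P b r i j).natDegree)) hi) ?_
      refine le_trans (Finset.le_sup (f := fun r : ZMod d => Finset.sup (Finset.range (e+1))
        (fun i => Finset.sup (Finset.range (e+1)) (fun j => (P b r i j).natDegree)))
        (Finset.mem_univ r)) ?_
      exact Finset.le_sup (f := fun b : ZMod d => Finset.sup Finset.univ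
        (fun r : ZMod d => Finset.sup (Finset.range (e+1)) (fun i => Finset.sup
          (Finset.range (e+1)) (fun j => (P b r i j).natDegree)))) (Finset.mem_univ b)
    omega
  refine ⟨e', fun r k => ∑ b : ZMod d, ∑ i ∈ Finset.range (e+1), ∑ j ∈ Finset.range (e+1),
    ((P b r i j).coeff k) • c b (r - b) i j, ?_⟩
  intro n hn
  have step1 : (∑ m ∈ Finset.Icc (0:ℤ) n, F m (n - m))
      = ∑ b : ZMod d, ∑ m ∈ (Finset.Icc (0:ℤ) n).filter (fun m : ℤ => (m : ZMod d) = b),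
          ∑ i ∈ Finset.range (e+1), ∑ j ∈ Finset.range (e+1),
            ((m:ℚ)^i * (((n - m : ℤ)):ℚ)^j) • c b ((n : ZMod d) - b) i j := by
    rw [← Finset.sum_fiberwise (Finset.Icc (0:ℤ) n) (fun m : ℤ => (m : ZMod d))
      (fun m => F m (n - m))]
    refine Finset.sum_congr rfl fun b _ => Finset.sum_congr rfl fun m hm => ?_
    simp only [Finset.mem_filter, Finset.mem_Icc] at hm
    obtain ⟨⟨hm0, hmn⟩, hmb⟩ := hm
    rw [hF1 m (n - m) hm0 (by omega)]
    have h2 : ((n - m : ℤ) : ZMod d) = (n : ZMod d) - b := by push_cast; rw [hmb]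
    rw [hmb, h2]
  have step2 : ∀ b : ZMod d,
      (∑ m ∈ (Finset.Icc (0:ℤ) n).filter (fun m : ℤ => (m : ZMod d) = b),
          ∑ i ∈ Finset.range (e+1), ∑ j ∈ Finset.range (e+1),
            ((m:ℚ)^i * (((n - m : ℤ)):ℚ)^j) • c b ((n : ZMod d) - b) i j)
        = ∑ i ∈ Finset.range (e+1), ∑ j ∈ Finset.range (e+1),
            ((P b (n : ZMod d) i j).eval ((n:ℚ))) • c b ((n : ZMod d) - b) i j := by
    intro b
    rw [Finset.sum_comm]
    refine Finset.sum_congr rfl fun i _ => ?_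
    rw [Finset.sum_comm]
    refine Finset.sum_congr rfl fun j _ => ?_
    rw [← Finset.sum_smul, hP b (n : ZMod d) i j n hn rfl]
  rw [step1, Finset.sum_congr rfl (fun b _ => step2 b)]
  -- now RHS
  calc ∑ b : ZMod d, ∑ i ∈ Finset.range (e+1), ∑ j ∈ Finset.range (e+1),
        ((P b (n : ZMod d) i j).eval ((n:ℚ))) • c b ((n : ZMod d) - b) i j
      = ∑ b : ZMod d, ∑ i ∈ Finset.range (e+1), ∑ j ∈ Finset.range (e+1),
          ∑ k ∈ Finset.range (e'+1),
            (((n:ℚ))^k * (P b (n : ZMod d) i j).coeff k) • c b ((n : ZMod d) - b) i j := by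
        refine Finset.sum_congr rfl fun b _ => Finset.sum_congr rfl fun i hi =>
          Finset.sum_congr rfl fun j hj => ?_
        rw [← Finset.sum_smul, Polynomial.eval_eq_sum_range' (hdeg b (n : ZMod d) i hi j hj)]
        congr 1
        exact Finset.sum_congr rfl fun k _ => mul_comm _ _
    _ = ∑ k ∈ Finset.range (e'+1), ∑ b : ZMod d, ∑ i ∈ Finset.range (e+1),
          ∑ j ∈ Finset.range (e+1),
            (((n:ℚ))^k * (P b (n : ZMod d) i j).coeff k) • c b ((n : ZMod d) - b) i j :=
        sum_swap4 Finset.univ (Finset.range (e+1)) (Finset.range (e+1)) (Finset.range (e'+1))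
          (fun b i j k => (((n:ℚ))^k * (P b (n : ZMod d) i j).coeff k) • c b ((n : ZMod d) - b) i j)
    _ = _ := by
        refine Finset.sum_congr rfl fun k _ => ?_
        rw [Finset.smul_sum]
        refine Finset.sum_congr rfl fun b _ => ?_
        rw [Finset.smul_sum]
        refine Finset.sum_congr rfl fun i _ => ?_
        rw [Finset.smul_sum]
        refine Finset.sum_congr rfl fun j _ => ?_
        rw [smul_smul]
end

section
/- Let V be a ℚ-vector space, D : V → V linear, R : V → V linear, and suppose [R, D] = c · id for some nonzero c ∈ ℚ (i.e. R∘D - D∘R = c·id). Let K = ker R. Then for every v ∈ V with R^{k+1}(v) = 0 for some k ≥ 0, the element Π(v) := ∑_{i=0}^{k} (1/(i! (-c)^i)) D^i(R^i(v)) lies in K, and v - Π(v) lies in the image of D. -/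
private lemma comm_pow {V : Type*} [AddCommGroup V] [Module ℚ V]
    (D R : V →ₗ[ℚ] V) (c : ℚ)
    (hcomm : R ∘ₗ D - D ∘ₗ R = c • (LinearMap.id : V →ₗ[ℚ] V)) :
    ∀ (i : ℕ) (x : V), R ((D ^ (i + 1)) x) = (D ^ (i + 1)) (R x) + (((i : ℚ) + 1) * c) • (D ^ i) x := by
  have hbase : ∀ x : V, R (D x) = D (R x) + c • x := by
    intro x
    have := congrFun (congrArg DFunLike.coe hcomm) x
    simp [LinearMap.sub_apply] at this
    linear_combination (norm := module) this
  intro i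
  induction i with
  | zero => intro x; simpa using hbase x
  | succ i ih =>
    intro x
    have h1 : (D ^ (i + 2)) x = (D ^ (i + 1)) (D x) := by
      rw [pow_succ]; rfl
    have h2 : ∀ y : V, (D ^ (i + 2)) y = (D ^ (i + 1)) (D y) := by
      intro y; rw [pow_succ]; rfl
    have h3 : ∀ y : V, (D ^ (i + 1)) y = (D ^ i) (D y) := by
      intro y; rw [pow_succ]; rfl
    rw [h1, ih (D x), hbase x, map_add, map_smul, ← h2, ← h3]
    push_cast
    module

/-- Let `V` be a ℚ-vector space, `D, R : V → V` linear with
`R∘D - D∘R = c·id` for some nonzero `c ∈ ℚ`, and `v ∈ V` with `R^{k+1}(v) = 0`.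
Then `Π(v) := ∑_{i=0}^{k} (1/(i!(-c)^i)) Dⁱ(Rⁱ(v))` lies in `K = ker R`, and
`v - Π(v)` lies in the image of `D`. -/
theorem stmt_19 {V : Type*} [AddCommGroup V] [Module ℚ V]
    (D R : V →ₗ[ℚ] V) (c : ℚ) (hc : c ≠ 0)
    (hcomm : R ∘ₗ D - D ∘ₗ R = c • (LinearMap.id : V →ₗ[ℚ] V))
    (k : ℕ) (v : V) (hv : (R ^ (k + 1)) v = 0) :
    (∑ i ∈ Finset.range (k + 1),
        (((Nat.factorial i : ℚ)) * (-c) ^ i)⁻¹ • (D ^ i) ((R ^ i) v))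
      ∈ LinearMap.ker R ∧
    v - (∑ i ∈ Finset.range (k + 1),
        (((Nat.factorial i : ℚ)) * (-c) ^ i)⁻¹ • (D ^ i) ((R ^ i) v))
      ∈ LinearMap.range D := by
  have hcp := comm_pow D R c hcomm
  set a : ℕ → ℚ := fun i => ((Nat.factorial i : ℚ) * (-c) ^ i)⁻¹ with ha
  set t : ℕ → V := fun i => a i • (D ^ i) ((R ^ i) v) with ht
  set g : ℕ → V := fun i => a i • (D ^ i) ((R ^ (i + 1)) v) with hg
  have hR1 : ∀ i : ℕ, (R ^ (i + 1)) v = R ((R ^ i) v) := by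
    intro i; rw [pow_succ']; rfl
  -- key: R (t (i+1)) = g (i+1) - g i
  have hcoef : ∀ i : ℕ, a (i + 1) * (((i : ℚ) + 1) * c) = -(a i) := by
    intro i
    have hf : (Nat.factorial i : ℚ) ≠ 0 := Nat.cast_ne_zero.mpr (Nat.factorial_ne_zero i)
    have hnc : (-c : ℚ) ≠ 0 := neg_ne_zero.mpr hc
    rw [ha]
    simp only [Nat.factorial_succ, Nat.cast_mul, pow_succ]
    field_simp
    push_cast
    ring
  have hkey : ∀ i : ℕ, R (t (i + 1)) = g (i + 1) - g i := by
    intro i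
    have := hcp i ((R ^ (i + 1)) v)
    rw [ht]
    simp only [map_smul, this]
    rw [← hR1 (i + 1)]
    rw [smul_add, smul_smul, hcoef i]
    simp [hg]
    abel
  have hkey0 : R (t 0) = g 0 := by
    simp [ht, hg, hR1 0]
  have hgk : g k = 0 := by simp [hg, hv]
  constructor
  · rw [LinearMap.mem_ker, map_sum]
    have : ∀ n : ℕ, ∑ i ∈ Finset.range (n + 1), R (t i) = g n := by
      intro n
      induction n with
      | zero => simpa using hkey0
      | succ n ihn =>
        rw [Finset.sum_range_succ, ihn, hkey n]
        abel
    rw [this k, hgk]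
  · refine ⟨-∑ i ∈ Finset.range k, a (i + 1) • (D ^ i) ((R ^ (i + 1)) v), ?_⟩
    have hsplit : (∑ i ∈ Finset.range (k + 1), t i)
        = (∑ i ∈ Finset.range k, t (i + 1)) + t 0 := Finset.sum_range_succ' t k
    have ht0 : t 0 = v := by simp [ht, ha]
    have hDt : ∀ i : ℕ, D (a (i + 1) • (D ^ i) ((R ^ (i + 1)) v)) = t (i + 1) := by
      intro i
      rw [ht, map_smul]
      congr 1
      rw [pow_succ' D i]; rfl
    rw [map_neg, map_sum]
    simp only [hDt]
    rw [hsplit, ht0]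
    abel
end
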